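/- Let $\alpha=\{\alpha_n\}$ be a strictly increasing, bounded, positive sequence such that $W_\alpha$ is 2-hyponormal, and set $u_n = \alpha_n^2-\alpha_{n-1}^2$, $v_n = \alpha_n^2\alpha_{n+1}^2-\alpha_{n-1}^2\alpha_{n-2}^2$ (with $\alpha_{-1}=\alpha_{-2}=0$). Then the sequence $k_n := v_n/u_n$ ($n\ge 2$) is bounded. -/

import Mathlib

/-!
Write `a n = α n ^ 2` and `r n = (a (n+2) - a (n+1)) / (a (n+1) - a n)`. The determinant of the
`3 × 3` Hankel moment matrix at `n` is a positive multiple of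
`a (n+2) (a (n+1) - a n) (a (n+3) - a (n+2)) - a n (a (n+2) - a (n+1))²`, so 2-hyponormality says
exactly that `r n * a n * a (n+1)` is nondecreasing. This bounds `r` below by a positive constant,
and also above: once `r n * a n * a (n+1)` exceeds `(sup a)²`, `r` stays above some `q > 1`, so the
increments of `a` grow geometrically, contradicting boundedness. Finally
`k (n+2) = a (n+2) (1 + r (n+1)) + a (n+1) (1 + 1 / r n)`.
-/

/-- The moments `γ n = α₀² ⋯ α_{n-1}²` of a weighted shift. -/
noncomputable def gam (α : ℕ → ℝ) (n : ℕ) : ℝ := ∏ k ∈ Finset.range n, α k ^ 2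

/-- `W_α` is `k`-hyponormal iff all `(k+1) × (k+1)` Hankel moment matrices are PSD. -/
def KHyponormal (k : ℕ) (α : ℕ → ℝ) : Prop :=
  ∀ n : ℕ, (Matrix.of fun i j : Fin (k + 1) => gam α (n + i + j)).PosSemidef

/-- Extension of the weight sequence by `α₋₁ = α₋₂ = 0`. -/
noncomputable def ae (α : ℕ → ℝ) : ℤ → ℝ := fun n => if 0 ≤ n then α n.toNat else 0

noncomputable def uu (α : ℕ → ℝ) (n : ℕ) : ℝ := ae α n ^ 2 - ae α ((n : ℤ) - 1) ^ 2

noncomputable def vv (α : ℕ → ℝ) (n : ℕ) : ℝ :=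
  ae α n ^ 2 * ae α ((n : ℤ) + 1) ^ 2 - ae α ((n : ℤ) - 1) ^ 2 * ae α ((n : ℤ) - 2) ^ 2

noncomputable def ww (α : ℕ → ℝ) (n : ℕ) : ℝ :=
  ae α n ^ 2 * (ae α ((n : ℤ) + 1) ^ 2 - ae α ((n : ℤ) - 1) ^ 2) ^ 2

noncomputable def pp (α : ℕ → ℝ) (n : ℕ) : ℝ := uu α n * vv α (n + 1) - ww α n

open Filter

section DiffRatio

variable {a : ℕ → ℝ}

noncomputable def diffRatio (a : ℕ → ℝ) (n : ℕ) : ℝ :=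
  (a (n + 2) - a (n + 1)) / (a (n + 1) - a n)

theorem diffRatio_pos (hmono : StrictMono a) (n : ℕ) : 0 < diffRatio a n :=
  div_pos (sub_pos.2 (hmono (by omega))) (sub_pos.2 (hmono (by omega)))

theorem exists_diffRatio_lt (hmono : StrictMono a) (hbdd : BddAbove (Set.range a)) {q : ℝ}
    (hq : 1 < q) (m : ℕ) : ∃ n, m ≤ n ∧ diffRatio a n < q := by
  by_contra! hge
  obtain ⟨B, hB⟩ := hbdd
  have hgrowth : Tendsto (fun j => a (m + j + 1) - a (m + j)) atTop atTop := by
    refine tendsto_atTop_of_geom_le (sub_pos.2 (hmono (by omega))) hq fun j => ?_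
    have hd := sub_pos.2 (hmono (Nat.lt_succ_self (m + j)))
    have := (le_div_iff₀ hd).1 (hge (m + j) (by omega))
    simpa only [← add_assoc] using this
  obtain ⟨j, hj⟩ := (hgrowth.eventually_gt_atTop (B - a 0)).exists
  have := hmono.monotone (Nat.zero_le (m + j))
  linarith [hB ⟨m + j + 1, rfl⟩]

theorem monotone_diffRatio_mul (hmono : StrictMono a) (hnonneg : ∀ n, 0 ≤ a n)
    (hcond : ∀ n, a n * (a (n + 2) - a (n + 1)) ^ 2
      ≤ a (n + 2) * (a (n + 1) - a n) * (a (n + 3) - a (n + 2))) :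
    Monotone fun n => diffRatio a n * (a n * a (n + 1)) := by
  refine monotone_nat_of_le_succ fun n => ?_
  have h0 := sub_pos.2 (hmono (Nat.lt_succ_self n))
  have h1 := sub_pos.2 (hmono (Nat.lt_succ_self (n + 1)))
  simp only [diffRatio]
  rw [div_mul_eq_mul_div, div_mul_eq_mul_div, div_le_div_iff₀ h0 h1]
  nlinarith [mul_le_mul_of_nonneg_left (hcond n) (hnonneg (n + 1))]

theorem quotient_eq_diffRatio (hmono : StrictMono a) (n : ℕ) :
    (a (n + 2) * a (n + 3) - a (n + 1) * a n) / (a (n + 2) - a (n + 1))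
      = a (n + 2) * (1 + diffRatio a (n + 1)) + a (n + 1) * (1 + (diffRatio a n)⁻¹) := by
  have h0 := (sub_pos.2 (hmono (Nat.lt_succ_self n))).ne'
  have h1 := (sub_pos.2 (hmono (Nat.lt_succ_self (n + 1)))).ne'
  simp only [diffRatio, inv_div]
  field_simp
  ring

end DiffRatio

section Bounds

variable {a : ℕ → ℝ} (hmono : StrictMono a) (hpos : ∀ n, 0 < a n) {B : ℝ}
  (hB : ∀ n, a n ≤ B) (hcond : ∀ n, a n * (a (n + 2) - a (n + 1)) ^ 2
    ≤ a (n + 2) * (a (n + 1) - a n) * (a (n + 3) - a (n + 2)))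
include hmono hpos hB hcond

theorem diffRatio_mul_le_sq (n : ℕ) : diffRatio a n * (a n * a (n + 1)) ≤ B ^ 2 := by
  by_contra! hlt
  have hB0 : 0 < B ^ 2 := pow_pos ((hpos 0).trans_le (hB 0)) 2
  obtain ⟨m, hnm, hm⟩ := exists_diffRatio_lt hmono ⟨B, by rintro _ ⟨k, rfl⟩; exact hB k⟩
    ((one_lt_div hB0).2 hlt) n
  have hprod := mul_le_mul (hB m) (hB (m + 1)) (hpos _).le ((hpos 0).le.trans (hB 0))
  have := monotone_diffRatio_mul hmono (fun k => (hpos k).le) hcond hnm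
  rw [lt_div_iff₀ hB0] at hm
  nlinarith [diffRatio_pos hmono m]

theorem diffRatio_le (n : ℕ) : diffRatio a n ≤ B ^ 2 / a 0 ^ 2 := by
  have hprod := mul_le_mul (hmono.monotone (Nat.zero_le n)) (hmono.monotone (Nat.zero_le (n + 1)))
    (hpos 0).le (hpos n).le
  rw [le_div_iff₀ (pow_pos (hpos 0) 2)]
  nlinarith [diffRatio_mul_le_sq hmono hpos hB hcond n, diffRatio_pos hmono n]

theorem le_diffRatio (n : ℕ) : diffRatio a 0 * (a 0 * a 1) / B ^ 2 ≤ diffRatio a n := by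
  have hprod := mul_le_mul (hB n) (hB (n + 1)) (hpos _).le ((hpos 0).le.trans (hB 0))
  rw [div_le_iff₀ (pow_pos ((hpos 0).trans_le (hB 0)) 2)]
  nlinarith [monotone_diffRatio_mul hmono (fun k => (hpos k).le) hcond (Nat.zero_le n),
    diffRatio_pos hmono n]

theorem exists_quotient_le :
    ∃ M, ∀ n, (a (n + 2) * a (n + 3) - a (n + 1) * a n) / (a (n + 2) - a (n + 1)) ≤ M := by
  set c := diffRatio a 0 * (a 0 * a 1) / B ^ 2
  have hB0 : 0 < B := (hpos 0).trans_le (hB 0)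
  have hc : 0 < c := by
    have := diffRatio_pos hmono 0
    have := hpos 0
    have := hpos 1
    positivity
  refine ⟨B * (1 + B ^ 2 / a 0 ^ 2) + B * (1 + c⁻¹), fun n => ?_⟩
  have hr := diffRatio_pos hmono n
  have hr' := diffRatio_pos hmono (n + 1)
  rw [quotient_eq_diffRatio hmono]
  gcongr
  · exact hB _
  · exact diffRatio_le hmono hpos hB hcond _
  · exact hB _
  · exact le_diffRatio hmono hpos hB hcond n

end Bounds

theorem gam_succ (α : ℕ → ℝ) (n : ℕ) : gam α (n + 1) = gam α n * α n ^ 2 :=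
  Finset.prod_range_succ _ _

theorem det_hankel_gam (α : ℕ → ℝ) (n : ℕ) :
    (Matrix.of fun i j : Fin 3 => gam α (n + i + j)).det
      = gam α n ^ 3 * α n ^ 4 * α (n + 1) ^ 2 *
        (α (n + 2) ^ 2 * (α (n + 1) ^ 2 - α n ^ 2) * (α (n + 3) ^ 2 - α (n + 2) ^ 2)
          - α n ^ 2 * (α (n + 2) ^ 2 - α (n + 1) ^ 2) ^ 2) := by
  simp only [Matrix.det_fin_three, Matrix.of_apply, Fin.val_zero, Fin.val_one, Fin.val_two,
    add_zero, gam_succ]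
  ring

theorem KHyponormal.sq_mul_sub_sq_le {α : ℕ → ℝ} (hpos : ∀ n, 0 < α n)
    (h2 : KHyponormal 2 α) (n : ℕ) :
    α n ^ 2 * (α (n + 2) ^ 2 - α (n + 1) ^ 2) ^ 2
      ≤ α (n + 2) ^ 2 * (α (n + 1) ^ 2 - α n ^ 2) * (α (n + 3) ^ 2 - α (n + 2) ^ 2) := by
  have hdet := (h2 n).det_nonneg
  rw [det_hankel_gam] at hdet
  have hgam : 0 < gam α n := Finset.prod_pos fun k _ => pow_pos (hpos k) 2
  have := hpos n
  have := hpos (n + 1)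
  exact sub_nonneg.1 (nonneg_of_mul_nonneg_right hdet (by positivity))

theorem ae_natCast (α : ℕ → ℝ) (n : ℕ) : ae α n = α n := by simp [ae]

theorem uu_add_two (α : ℕ → ℝ) (n : ℕ) :
    uu α (n + 2) = α (n + 2) ^ 2 - α (n + 1) ^ 2 := by
  have h : ((n + 2 : ℕ) : ℤ) - 1 = (n + 1 : ℕ) := by push_cast; ring
  rw [uu, h, ae_natCast, ae_natCast]

theorem vv_add_two (α : ℕ → ℝ) (n : ℕ) :
    vv α (n + 2) = α (n + 2) ^ 2 * α (n + 3) ^ 2 - α (n + 1) ^ 2 * α n ^ 2 := by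
  have h1 : ((n + 2 : ℕ) : ℤ) + 1 = (n + 3 : ℕ) := by push_cast; ring
  have h2 : ((n + 2 : ℕ) : ℤ) - 1 = (n + 1 : ℕ) := by push_cast; ring
  have h3 : ((n + 2 : ℕ) : ℤ) - 2 = n := by push_cast; ring
  rw [vv, h1, h2, h3]
  simp only [ae_natCast]

theorem stmt_10 (α : ℕ → ℝ) (hpos : ∀ n, 0 < α n) (hmono : StrictMono α)
    (hbdd : BddAbove (Set.range α)) (h2 : KHyponormal 2 α) :
    ∃ M : ℝ, ∀ n : ℕ, 2 ≤ n → vv α n / uu α n ≤ M := by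
  obtain ⟨C, hC⟩ := hbdd
  have hmono_sq : StrictMono fun n => α n ^ 2 :=
    fun m n hmn => pow_lt_pow_left₀ (hmono hmn) (hpos m).le two_ne_zero
  have hC_sq (n : ℕ) : α n ^ 2 ≤ C ^ 2 :=
    pow_le_pow_left₀ (hpos n).le (hC ⟨n, rfl⟩) 2
  obtain ⟨M, hM⟩ := exists_quotient_le hmono_sq (fun n => pow_pos (hpos n) 2) hC_sq
    (h2.sq_mul_sub_sq_le hpos)
  refine ⟨M, fun n hn => ?_⟩
  obtain ⟨m, rfl⟩ := Nat.exists_eq_add_of_le' hn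
  rw [vv_add_two, uu_add_two]
  exact hM m
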